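/- Let ρ : ℝ → ℝ be Borel measurable, let a < b be real numbers and let T > 0. Then (1/T²) ∫_{[aT,bT]^4} |ρ(u−v)| · |ρ(w−z)| · |ρ(u−w)| · |ρ(z−v)| du dv dw dz ≤ ((b−a)/T) ∫_{ℝ³} |ρ(x)| · |ρ(y)| · |ρ(t)| · |ρ(x−y−t)| dx dy dt, where both sides are Lebesgue integrals with values in [0, ∞]. -/

import Mathlib

open MeasureTheory
open scoped ENNReal

/-!
The substitution `x = u - v`, `y = u - w`, `t = z - v` turns the integrand into
`|ρ x| |ρ y| |ρ t| |ρ (x - y - t)|`, because `w - z = x - y - t`. For fixed `u`, enlarging the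
domains of `v`, `w`, `z` to the whole line and using translation and reflection invariance of
Lebesgue measure bounds the inner triple integral by the integral over `ℝ³`; the remaining
integral over `u` contributes the factor `(b - a) T`.
-/

section TranslationInvariant

variable {G : Type*} [MeasurableSpace G] [AddCommGroup G] [MeasurableAdd G] [MeasurableNeg G]
  (μ : Measure G) [μ.IsAddLeftInvariant] [μ.IsNegInvariant]

theorem setLIntegral_lintegral_lintegral_sub_le (f : G → G → G → ℝ≥0∞) (s : Set G) (u : G) :
    ∫⁻ v in s, ∫⁻ w in s, ∫⁻ z in s, f (u - v) (u - w) (z - v) ∂μ ∂μ ∂μ ≤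
      ∫⁻ x, ∫⁻ y, ∫⁻ t, f x y t ∂μ ∂μ ∂μ :=
  calc ∫⁻ v in s, ∫⁻ w in s, ∫⁻ z in s, f (u - v) (u - w) (z - v) ∂μ ∂μ ∂μ
      ≤ ∫⁻ v, ∫⁻ w, ∫⁻ z, f (u - v) (u - w) (z - v) ∂μ ∂μ ∂μ :=
        lintegral_mono' Measure.restrict_le_self fun _ ↦
          lintegral_mono' Measure.restrict_le_self fun _ ↦
            lintegral_mono' Measure.restrict_le_self fun _ ↦ le_rfl
    _ = ∫⁻ v, ∫⁻ w, ∫⁻ t, f (u - v) (u - w) t ∂μ ∂μ ∂μ :=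
        lintegral_congr fun v ↦ lintegral_congr fun w ↦
          lintegral_sub_right_eq_self (f (u - v) (u - w)) v
    _ = ∫⁻ v, ∫⁻ y, ∫⁻ t, f (u - v) y t ∂μ ∂μ ∂μ :=
        lintegral_congr fun v ↦ lintegral_sub_left_eq_self (fun y ↦ ∫⁻ t, f (u - v) y t ∂μ) u
    _ = ∫⁻ x, ∫⁻ y, ∫⁻ t, f x y t ∂μ ∂μ ∂μ :=
        lintegral_sub_left_eq_self (fun x ↦ ∫⁻ y, ∫⁻ t, f x y t ∂μ ∂μ) u

end TranslationInvariant

theorem ofReal_one_div_sq_mul_volume_Icc (a b T : ℝ) :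
    ENNReal.ofReal (1 / T ^ 2) * volume (Set.Icc (a * T) (b * T)) =
      ENNReal.ofReal ((b - a) / T) := by
  rw [Real.volume_Icc, ← ENNReal.ofReal_mul (by positivity)]
  congr 1
  calc 1 / T ^ 2 * (b * T - a * T) = (b - a) * (T / (T * T)) := by ring
    _ = (b - a) / T := by rw [div_self_mul_self', div_eq_mul_inv]

theorem stmt15_general (ρ : ℝ → ℝ) (a b : ℝ) (T : ℝ) :
    ENNReal.ofReal (1 / T ^ 2) *
      ∫⁻ u in Set.Icc (a * T) (b * T), ∫⁻ v in Set.Icc (a * T) (b * T),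
        ∫⁻ w in Set.Icc (a * T) (b * T), ∫⁻ z in Set.Icc (a * T) (b * T),
          ENNReal.ofReal (|ρ (u - v)| * |ρ (w - z)| * |ρ (u - w)| * |ρ (z - v)|) ≤
    ENNReal.ofReal ((b - a) / T) *
      ∫⁻ x : ℝ, ∫⁻ y : ℝ, ∫⁻ t : ℝ,
        ENNReal.ofReal (|ρ x| * |ρ y| * |ρ t| * |ρ (x - y - t)|) := by
  set I := Set.Icc (a * T) (b * T)
  set g : ℝ → ℝ → ℝ → ℝ≥0∞ := fun x y t ↦ ENNReal.ofReal (|ρ x| * |ρ y| * |ρ t| * |ρ (x - y - t)|)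
  have hg (u v w z : ℝ) :
      ENNReal.ofReal (|ρ (u - v)| * |ρ (w - z)| * |ρ (u - w)| * |ρ (z - v)|) =
        g (u - v) (u - w) (z - v) := by
    simp only [g, show u - v - (u - w) - (z - v) = w - z by ring]
    ring_nf
  calc ENNReal.ofReal (1 / T ^ 2) * ∫⁻ u in I, ∫⁻ v in I, ∫⁻ w in I, ∫⁻ z in I,
          ENNReal.ofReal (|ρ (u - v)| * |ρ (w - z)| * |ρ (u - w)| * |ρ (z - v)|)
      = ENNReal.ofReal (1 / T ^ 2) *
          ∫⁻ u in I, ∫⁻ v in I, ∫⁻ w in I, ∫⁻ z in I, g (u - v) (u - w) (z - v) := by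
        simp only [hg]
    _ ≤ ENNReal.ofReal (1 / T ^ 2) * ∫⁻ _ in I, ∫⁻ x, ∫⁻ y, ∫⁻ t, g x y t := by
        gcongr ENNReal.ofReal (1 / T ^ 2) * ?_
        exact lintegral_mono fun u ↦ setLIntegral_lintegral_lintegral_sub_le volume g I u
    _ = ENNReal.ofReal ((b - a) / T) * ∫⁻ x, ∫⁻ y, ∫⁻ t, g x y t := by
        rw [setLIntegral_const, mul_comm _ (volume I), ← mul_assoc,
          ofReal_one_div_sq_mul_volume_Icc]

/-- The key deterministic estimate in the proof of Theorem 6.1: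
`(1/T²) ∫_{[aT,bT]⁴} |ρ(u−v)||ρ(w−z)||ρ(u−w)||ρ(z−v)| du dv dw dz
  ≤ ((b−a)/T) ∫_{ℝ³} |ρ(x)||ρ(y)||ρ(t)||ρ(x−y−t)| dx dy dt`,
both sides being Lebesgue integrals with values in `[0,∞]`. -/
theorem stmt15 (ρ : ℝ → ℝ) (hρ : Measurable ρ) (a b : ℝ) (hab : a < b) (T : ℝ) (hT : 0 < T) :
    ENNReal.ofReal (1 / T ^ 2) *
      ∫⁻ u in Set.Icc (a * T) (b * T), ∫⁻ v in Set.Icc (a * T) (b * T),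
        ∫⁻ w in Set.Icc (a * T) (b * T), ∫⁻ z in Set.Icc (a * T) (b * T),
          ENNReal.ofReal (|ρ (u - v)| * |ρ (w - z)| * |ρ (u - w)| * |ρ (z - v)|) ≤
    ENNReal.ofReal ((b - a) / T) *
      ∫⁻ x : ℝ, ∫⁻ y : ℝ, ∫⁻ t : ℝ,
        ENNReal.ofReal (|ρ x| * |ρ y| * |ρ t| * |ρ (x - y - t)|) :=
  stmt15_general ρ a b T
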